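/- arXiv:1307.2302 — 2 statements merged into one kernel-verified Lean document; each statement's English description precedes it below -/
import Mathlib

section
/- In a graph with maximum degree at most M, changing all edges incident to a single vertex changes the number of connected triples (2-stars) by at most 3·C(M,2) ≤ (3/2)M². -/
/-!
Only the 2-stars containing `v` can differ between the two graphs. Those centred at `v` are pairs
of neighbours of `v`, at most `C(M,2)` of them; those with centre `c ≠ v` and a leaf at `v` are
pairs `(c, w)` with `c ∈ N(v)` and `w ∈ N(c) \ {v}`, at most `M(M-1) = 2 C(M,2)` of them. Each
count is therefore the common number of 2-stars avoiding `v` plus something in `[0, 3 C(M,2)]`.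
-/

open Finset

lemma two_mul_choose_two (M : ℕ) : 2 * M.choose 2 = M * (M - 1) := by
  rw [Nat.choose_two_right, Nat.two_mul_div_two_of_even (Nat.even_mul_pred_self M)]

lemma three_mul_choose_two_le (M : ℕ) : 3 * (M.choose 2 : ℝ) ≤ 3 / 2 * (M : ℝ) ^ 2 := by
  have := Nat.choose_le_pow_div (α := ℝ) 2 M
  norm_num at this
  linarith

namespace TwoStar

variable {α : Type*} [Fintype α] [LinearOrder α]

/-- The 2-stars of `A` as triples `(centre, leaf, leaf)`; ordering the leaves counts each
unordered 2-star once. -/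
def twoStars (A : α → α → Bool) : Finset (α × α × α) :=
  {x | x.2.1 < x.2.2 ∧ x.2.1 ≠ x.1 ∧ x.2.2 ≠ x.1 ∧ A x.1 x.2.1 = true ∧ A x.1 x.2.2 = true}

def neighbors (A : α → α → Bool) (i : α) : Finset α := {j | A i j = true}

def twoStarsThrough (A : α → α → Bool) (v : α) : Finset (α × α × α) :=
  {x ∈ twoStars A | x.1 = v ∨ x.2.1 = v ∨ x.2.2 = v}

lemma card_twoStars_centre_le (A : α → α → Bool) (v : α) :
    #{x ∈ twoStars A | x.1 = v} ≤ (#(neighbors A v)).choose 2 := by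
  rw [← card_product_filter_lt]
  refine card_le_card_of_injOn Prod.snd (fun x hx => ?_) (fun x hx y hy h => ?_)
  · simp only [twoStars, neighbors, mem_coe, mem_filter, mem_univ, true_and, mem_product] at hx ⊢
    grind
  · simp_all [twoStars, Prod.ext_iff]

lemma card_twoStars_leaf_le {A : α → α → Bool} (hsym : ∀ i j, A i j = A j i) (v : α) {M : ℕ}
    (hdeg : ∀ i, #(neighbors A i) ≤ M) :
    #{x ∈ twoStars A | x.1 ≠ v ∧ (x.2.1 = v ∨ x.2.2 = v)} ≤ M * (M - 1) :=
  calc _ ≤ #((neighbors A v).sigma fun c => (neighbors A c).erase v) := by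
        refine card_le_card_of_injOn (fun x => ⟨x.1, if x.2.1 = v then x.2.2 else x.2.1⟩)
          (fun x hx => ?_) (fun x hx y hy h => ?_)
        · simp only [twoStars, neighbors, mem_coe, mem_filter, mem_univ, true_and, mem_sigma,
            mem_erase] at hx ⊢
          grind
        · simp only [twoStars, mem_coe, mem_filter, mem_univ, true_and] at hx hy
          simp only [Sigma.mk.injEq] at h
          grind
    _ = ∑ c ∈ neighbors A v, (#(neighbors A c) - 1) := by
        rw [card_sigma]
        refine sum_congr rfl fun c hc => card_erase_of_mem ?_
        simp only [neighbors, mem_filter, mem_univ, true_and] at hc ⊢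
        rwa [hsym]
    _ ≤ #(neighbors A v) * (M - 1) :=
        sum_le_card_nsmul _ _ _ fun c _ => Nat.sub_le_sub_right (hdeg c) 1
    _ ≤ M * (M - 1) := Nat.mul_le_mul_right _ (hdeg v)

lemma card_twoStarsThrough_le {A : α → α → Bool} (hsym : ∀ i j, A i j = A j i) (v : α)
    {M : ℕ} (hdeg : ∀ i, #(neighbors A i) ≤ M) :
    #(twoStarsThrough A v) ≤ 3 * M.choose 2 := by
  have hsplit : twoStarsThrough A v =
      {x ∈ twoStars A | x.1 = v} ∪ {x ∈ twoStars A | x.1 ≠ v ∧ (x.2.1 = v ∨ x.2.2 = v)} := by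
    ext x
    simp only [twoStarsThrough, mem_filter, mem_union]
    tauto
  have hcentre : (#(neighbors A v)).choose 2 ≤ M.choose 2 := Nat.choose_le_choose 2 (hdeg v)
  calc #(twoStarsThrough A v)
      ≤ #{x ∈ twoStars A | x.1 = v} + #{x ∈ twoStars A | x.1 ≠ v ∧ (x.2.1 = v ∨ x.2.2 = v)} :=
        hsplit ▸ card_union_le _ _
    _ ≤ M.choose 2 + 2 * M.choose 2 := by
        rw [two_mul_choose_two]
        exact add_le_add ((card_twoStars_centre_le A v).trans hcentre)
          (card_twoStars_leaf_le hsym v hdeg)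
    _ = 3 * M.choose 2 := by ring

lemma twoStars_sdiff_twoStarsThrough_congr {A A' : α → α → Bool} {v : α}
    (hagree : ∀ i j, i ≠ v → j ≠ v → A i j = A' i j) :
    twoStars A \ twoStarsThrough A v = twoStars A' \ twoStarsThrough A' v := by
  ext x
  simp only [twoStarsThrough, twoStars, mem_sdiff, mem_filter, mem_univ, true_and]
  grind

lemma abs_card_twoStars_sub_le {A A' : α → α → Bool} (hsymA : ∀ i j, A i j = A j i)
    (hsymA' : ∀ i j, A' i j = A' j i) {v : α} (hagree : ∀ i j, i ≠ v → j ≠ v → A i j = A' i j)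
    {M : ℕ} (hdegA : ∀ i, #(neighbors A i) ≤ M) (hdegA' : ∀ i, #(neighbors A' i) ≤ M) :
    |(#(twoStars A) : ℝ) - #(twoStars A')| ≤ 3 * M.choose 2 := by
  have hsplit (B : α → α → Bool) :
      #(twoStars B) = #(twoStars B \ twoStarsThrough B v) + #(twoStarsThrough B v) :=
    (card_sdiff_add_card_eq_card (filter_subset _ _)).symm
  rw [hsplit A, hsplit A', twoStars_sdiff_twoStarsThrough_congr hagree]
  push_cast
  rw [add_sub_add_left_eq_sub]
  exact abs_sub_le_of_nonneg_of_le (Nat.cast_nonneg _)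
    (mod_cast card_twoStarsThrough_le hsymA v hdegA) (Nat.cast_nonneg _)
    (mod_cast card_twoStarsThrough_le hsymA' v hdegA')

end TwoStar

open TwoStar in
theorem two_star_bounded_difference_general (n : ℕ) (A A' : Fin n → Fin n → Bool)
    (hsymA : ∀ i j, A i j = A j i) (hsymA' : ∀ i j, A' i j = A' j i)
    (v : Fin n) (hagree : ∀ i j, i ≠ v → j ≠ v → A i j = A' i j)
    (M : ℕ)
    (hdegA : ∀ i, (Finset.univ.filter fun j => A i j = true).card ≤ M)
    (hdegA' : ∀ i, (Finset.univ.filter fun j => A' i j = true).card ≤ M) :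
    |(((Finset.univ.filter fun x : Fin n × Fin n × Fin n =>
          x.2.1 < x.2.2 ∧ x.2.1 ≠ x.1 ∧ x.2.2 ≠ x.1 ∧
          A x.1 x.2.1 = true ∧ A x.1 x.2.2 = true).card : ℝ)
        - ((Finset.univ.filter fun x : Fin n × Fin n × Fin n =>
          x.2.1 < x.2.2 ∧ x.2.1 ≠ x.1 ∧ x.2.2 ≠ x.1 ∧
          A' x.1 x.2.1 = true ∧ A' x.1 x.2.2 = true).card : ℝ))|
      ≤ 3 * (M.choose 2 : ℝ) ∧ 3 * (M.choose 2 : ℝ) ≤ (3 / 2) * (M : ℝ) ^ 2 :=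
  ⟨abs_card_twoStars_sub_le hsymA hsymA' hagree hdegA hdegA', three_mul_choose_two_le M⟩

/-- In a graph with maximum degree at most `M`, changing only the edges incident to a single
vertex `v` changes the number of (unordered) connected triples (2-stars) by at most
`3 * C(M,2)`, and `3 * C(M,2) ≤ (3/2) * M²`. -/
theorem two_star_bounded_difference (n : ℕ) (A A' : Fin n → Fin n → Bool)
    (hsymA : ∀ i j, A i j = A j i) (hsymA' : ∀ i j, A' i j = A' j i)
    (hAdiag : ∀ i, A i i = false) (hA'diag : ∀ i, A' i i = false)
    (v : Fin n) (hagree : ∀ i j, i ≠ v → j ≠ v → A i j = A' i j)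
    (M : ℕ)
    (hdegA : ∀ i, (Finset.univ.filter fun j => A i j = true).card ≤ M)
    (hdegA' : ∀ i, (Finset.univ.filter fun j => A' i j = true).card ≤ M) :
    |(((Finset.univ.filter fun x : Fin n × Fin n × Fin n =>
          x.2.1 < x.2.2 ∧ x.2.1 ≠ x.1 ∧ x.2.2 ≠ x.1 ∧
          A x.1 x.2.1 = true ∧ A x.1 x.2.2 = true).card : ℝ)
        - ((Finset.univ.filter fun x : Fin n × Fin n × Fin n =>
          x.2.1 < x.2.2 ∧ x.2.1 ≠ x.1 ∧ x.2.2 ≠ x.1 ∧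
          A' x.1 x.2.1 = true ∧ A' x.1 x.2.2 = true).card : ℝ))|
      ≤ 3 * (M.choose 2 : ℝ) ∧ 3 * (M.choose 2 : ℝ) ≤ (3 / 2) * (M : ℝ) ^ 2 :=
  two_star_bounded_difference_general n A A' hsymA hsymA' v hagree M hdegA hdegA'
end

section
/- Under the local Stochastic Blockmodel, the probability that there exist i ∈ S_*, j ∈ S_*^c with T_ij ≥ 1 (i.e., edge (i,j) lies in a triangle) is at most s·n·(s·p_out² + λ·p_out²), i.e., O(p_out² n s (s+λ)). -/
/-!
Union bound over the triples `(i, j, k)` with `i ∈ S⋆`, `j ∉ S⋆`. For distinct vertices the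
triangle `ijk` needs three distinct edges, which are independent. The edge `ij` crosses the
boundary, and so does `kj` if `k ∈ S⋆` or `ik` if `k ∉ S⋆`; this gives a factor `p_out²`, and
the third edge contributes at most `1` for `k ∈ S⋆` and its own probability `q(jk)` for
`k ∉ S⋆`. Summing `q(jk)` over ordered pairs in `S⋆ᶜ` counts each edge twice, which is the
quantity bounded by `n λ`.
-/

open MeasureTheory Finset

/-- Adjacency relation induced by a configuration of independent edge indicators on the
unordered pairs of `Fin N`. -/
def adjOf {N : ℕ} (ω : {e : Fin N × Fin N // e.1 < e.2} → Bool) (i j : Fin N) : Bool :=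
  if h : i < j then ω ⟨(i, j), h⟩ else if h' : j < i then ω ⟨(j, i), h'⟩ else false

abbrev Edge (N : ℕ) := {e : Fin N × Fin N // e.1 < e.2}

section Edges

variable {N : ℕ}

def Edge.ofNe (i j : Fin N) (h : i ≠ j) : Edge N :=
  if hij : i < j then ⟨(i, j), hij⟩ else ⟨(j, i), h.lt_or_gt.resolve_left hij⟩

lemma Edge.ofNe_val (i j : Fin N) (h : i ≠ j) :
    (Edge.ofNe i j h).1 = (i, j) ∨ (Edge.ofNe i j h).1 = (j, i) := by
  unfold Edge.ofNe; split_ifs <;> simp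

lemma Edge.ofNe_eq_ofNe {i j k l : Fin N} {h : i ≠ j} {h' : k ≠ l}
    (he : Edge.ofNe i j h = Edge.ofNe k l h') : (i = k ∧ j = l) ∨ (i = l ∧ j = k) := by
  have hv := congrArg Subtype.val he
  rcases Edge.ofNe_val i j h with h₁ | h₁ <;> rcases Edge.ofNe_val k l h' with h₂ | h₂ <;>
    rw [h₁, h₂] at hv <;> simp only [Prod.mk.injEq] at hv <;> tauto

lemma adjOf_eq_apply_ofNe (ω : Edge N → Bool) {i j : Fin N} (h : i ≠ j) :
    adjOf ω i j = ω (Edge.ofNe i j h) := by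
  unfold adjOf Edge.ofNe
  rcases h.lt_or_gt with hlt | hlt
  · rw [dif_pos hlt, dif_pos hlt]
  · rw [dif_neg hlt.not_gt, dif_neg hlt.not_gt, dif_pos hlt]

lemma ne_of_adjOf {ω : Edge N → Bool} {i j : Fin N} (h : adjOf ω i j = true) : i ≠ j := by
  rintro rfl
  simp [adjOf] at h

lemma apply_ofNe_le_of_mem_of_notMem {α : Type*} {q : Edge N → α} [LE α] {S : Finset (Fin N)}
    {c : α} (hcross : ∀ e : Edge N, (e.1.1 ∈ S ∧ e.1.2 ∉ S) ∨ (e.1.1 ∉ S ∧ e.1.2 ∈ S) → q e ≤ c)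
    {i j : Fin N} (hi : i ∈ S) (hj : j ∉ S) (h : i ≠ j) : q (Edge.ofNe i j h) ≤ c := by
  apply hcross
  rcases Edge.ofNe_val i j h with hv | hv <;> rw [hv] <;> simp [hi, hj]

end Edges

section Bernoulli

variable {ι : Type*} [Fintype ι]

noncomputable def boolBernoulli (p : ENNReal) (hp : p ≤ 1) : Measure Bool :=
  (PMF.bernoulli p.toNNReal (by simpa using ENNReal.toNNReal_mono ENNReal.one_ne_top hp)).toMeasure

instance (p : ENNReal) (hp : p ≤ 1) : IsProbabilityMeasure (boolBernoulli p hp) := by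
  unfold boolBernoulli; infer_instance

lemma boolBernoulli_singleton_true (p : ENNReal) (hp : p ≤ 1) :
    boolBernoulli p hp {true} = p := by
  rw [boolBernoulli, PMF.toMeasure_apply_singleton _ _ (measurableSet_singleton _)]
  exact ENNReal.coe_toNNReal (ne_top_of_le_ne_top ENNReal.one_ne_top hp)

lemma pi_boolBernoulli_setOf_forall_mem (q : ι → ENNReal) (hq : ∀ e, q e ≤ 1) (t : Finset ι) :
    Measure.pi (fun e => boolBernoulli (q e) (hq e)) {ω | ∀ e ∈ t, ω e = true} =
      ∏ e ∈ t, q e := by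
  have hset : {ω : ι → Bool | ∀ e ∈ t, ω e = true} = (t : Set ι).pi fun _ => {true} := by
    ext ω; simp
  simp [hset, boolBernoulli_singleton_true]

end Bernoulli

section Triangles

variable {N : ℕ}

def triangleEvent (i j k : Fin N) : Set (Edge N → Bool) :=
  {ω | adjOf ω i j = true ∧ adjOf ω i k = true ∧ adjOf ω k j = true}

lemma measure_triangleEvent_le (q : Edge N → ENNReal) (hq : ∀ e, q e ≤ 1) {i j k : Fin N}
    {c : ENNReal} (hc : ∀ (hij : i ≠ j) (hik : i ≠ k) (hkj : k ≠ j),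
      q (Edge.ofNe i j hij) * q (Edge.ofNe i k hik) * q (Edge.ofNe k j hkj) ≤ c) :
    Measure.pi (fun e => boolBernoulli (q e) (hq e)) (triangleEvent i j k) ≤ c := by
  classical
  by_cases hdist : i ≠ j ∧ i ≠ k ∧ k ≠ j
  · obtain ⟨hij, hik, hkj⟩ := hdist
    have hset : triangleEvent i j k = {ω | ∀ e ∈ ({Edge.ofNe i j hij, Edge.ofNe i k hik,
        Edge.ofNe k j hkj} : Finset (Edge N)), ω e = true} := by
      ext ω
      simp [triangleEvent, adjOf_eq_apply_ofNe ω hij, adjOf_eq_apply_ofNe ω hik,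
        adjOf_eq_apply_ofNe ω hkj]
    have h₁ : Edge.ofNe i j hij ≠ Edge.ofNe i k hik := fun he => by
      rcases Edge.ofNe_eq_ofNe he with h | h <;> tauto
    have h₂ : Edge.ofNe i j hij ≠ Edge.ofNe k j hkj := fun he => by
      rcases Edge.ofNe_eq_ofNe he with h | h <;> tauto
    have h₃ : Edge.ofNe i k hik ≠ Edge.ofNe k j hkj := fun he => by
      rcases Edge.ofNe_eq_ofNe he with h | h <;> tauto
    rw [hset, pi_boolBernoulli_setOf_forall_mem, prod_insert (by simp [h₁, h₂]),
      prod_pair h₃, ← mul_assoc]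
    exact hc hij hik hkj
  · have hempty : triangleEvent i j k = ∅ := by
      ext ω
      simp only [Set.mem_empty_iff_false, iff_false]
      rintro ⟨hij, hik, hkj⟩
      exact hdist ⟨ne_of_adjOf hij, ne_of_adjOf hik, ne_of_adjOf hkj⟩
    simp [hempty]

lemma measure_setOf_exists_triangle_le (μ : Measure (Edge N → Bool)) (S : Finset (Fin N)) :
    μ {ω | ∃ i ∈ S, ∃ j ∉ S, 1 ≤ (univ.filter fun k =>
        adjOf ω i j = true ∧ adjOf ω i k = true ∧ adjOf ω k j = true).card} ≤
      ∑ i ∈ S, ∑ j ∈ Sᶜ, ∑ k, μ (triangleEvent i j k) := by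
  have hsub : {ω | ∃ i ∈ S, ∃ j ∉ S, 1 ≤ (univ.filter fun k =>
      adjOf ω i j = true ∧ adjOf ω i k = true ∧ adjOf ω k j = true).card} ⊆
      ⋃ i ∈ S, ⋃ j ∈ Sᶜ, ⋃ k ∈ (univ : Finset (Fin N)), triangleEvent i j k := by
    rintro ω ⟨i, hi, j, hj, hcard⟩
    obtain ⟨k, hk⟩ := card_pos.mp hcard
    simp only [Set.mem_iUnion]
    exact ⟨i, hi, j, mem_compl.mpr hj, k, mem_univ k, (mem_filter.mp hk).2⟩
  refine (measure_mono hsub).trans <| (measure_biUnion_finset_le _ _).trans <|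
    sum_le_sum fun i _ => (measure_biUnion_finset_le _ _).trans <|
    sum_le_sum fun j _ => measure_biUnion_finset_le _ _

end Triangles

section PairSums

variable {N : ℕ} (q : Edge N → ENNReal)

def pairWeight (p : Fin N × Fin N) : ENNReal :=
  if h : p.1 < p.2 then q ⟨p, h⟩ else 0

lemma apply_ofNe_eq_pairWeight_add {j k : Fin N} (h : j ≠ k) :
    q (Edge.ofNe j k h) = pairWeight q (j, k) + pairWeight q (k, j) := by
  unfold Edge.ofNe pairWeight
  rcases h.lt_or_gt with hlt | hlt <;> simp [hlt, hlt.not_gt]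

lemma pairWeight_val (e : Edge N) : pairWeight q e.1 = q e :=
  dif_pos e.2

lemma sum_pairWeight_product (A : Finset (Fin N)) :
    ∑ p ∈ A ×ˢ A, pairWeight q p =
      ∑ e ∈ univ.filter (fun e : Edge N => e.1.1 ∈ A ∧ e.1.2 ∈ A), q e := by
  set B := univ.filter fun e : Edge N => e.1.1 ∈ A ∧ e.1.2 ∈ A
  calc ∑ p ∈ A ×ˢ A, pairWeight q p
      = ∑ p ∈ B.map (Function.Embedding.subtype _), pairWeight q p := by
        refine (sum_subset (fun p hp => ?_) fun p hpA hp => ?_).symm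
        · obtain ⟨e, he, rfl⟩ := mem_map.mp hp
          simpa [B, mem_product] using he
        · refine dif_neg fun hlt => hp (mem_map.mpr ⟨⟨p, hlt⟩, ?_, rfl⟩)
          simpa [B, mem_product] using hpA
    _ = ∑ e ∈ B, q e := by
        rw [sum_map]
        exact sum_congr rfl fun e _ => pairWeight_val q e

lemma sum_sum_pairWeight_add (A : Finset (Fin N)) :
    ∑ j ∈ A, ∑ k ∈ A, (pairWeight q (j, k) + pairWeight q (k, j)) =
      2 * ∑ e ∈ univ.filter (fun e : Edge N => e.1.1 ∈ A ∧ e.1.2 ∈ A), q e := by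
  simp only [sum_add_distrib]
  rw [sum_comm (f := fun j k => pairWeight q (k, j)), ← two_mul, ← sum_product',
    sum_pairWeight_product]

end PairSums

section Boundary

variable {N : ℕ} (q : Edge N → ENNReal) (hq : ∀ e, q e ≤ 1) {S : Finset (Fin N)} {pout : ENNReal}

lemma sum_measure_triangleEvent_le
    (hcross : ∀ e : Edge N, (e.1.1 ∈ S ∧ e.1.2 ∉ S) ∨ (e.1.1 ∉ S ∧ e.1.2 ∈ S) → q e ≤ pout)
    {i j : Fin N} (hi : i ∈ S) (hj : j ∉ S) :
    ∑ k, Measure.pi (fun e => boolBernoulli (q e) (hq e)) (triangleEvent i j k) ≤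
      #S * pout ^ 2 + (∑ k ∈ Sᶜ, (pairWeight q (j, k) + pairWeight q (k, j))) * pout ^ 2 := by
  rw [← sum_add_sum_compl S, sum_mul, ← nsmul_eq_mul]
  refine add_le_add (sum_le_card_nsmul _ _ _ fun k hk => ?_) (sum_le_sum fun k hk => ?_)
  · refine measure_triangleEvent_le q hq fun hij hik hkj => ?_
    calc q (Edge.ofNe i j hij) * q (Edge.ofNe i k hik) * q (Edge.ofNe k j hkj)
        ≤ pout * 1 * pout := by
          gcongr
          · exact apply_ofNe_le_of_mem_of_notMem hcross hi hj hij
          · exact hq _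
          · exact apply_ofNe_le_of_mem_of_notMem hcross hk hj hkj
      _ = pout ^ 2 := by ring
  · have hk' : k ∉ S := mem_compl.mp hk
    refine measure_triangleEvent_le q hq fun hij hik hkj => ?_
    calc q (Edge.ofNe i j hij) * q (Edge.ofNe i k hik) * q (Edge.ofNe k j hkj)
        ≤ pout * pout * (pairWeight q (k, j) + pairWeight q (j, k)) := by
          rw [apply_ofNe_eq_pairWeight_add q hkj]
          gcongr
          · exact apply_ofNe_le_of_mem_of_notMem hcross hi hj hij
          · exact apply_ofNe_le_of_mem_of_notMem hcross hi hk' hik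
      _ = (pairWeight q (j, k) + pairWeight q (k, j)) * pout ^ 2 := by ring

end Boundary

/-- Under the local Stochastic Blockmodel (edges independent, cross-boundary probabilities
at most `p_out`, the adversarial subgraph on `S⋆ᶜ` deterministic with
`Σ_{i,j ∈ S⋆ᶜ} A_ij ≤ n λ`), the probability that there exist `i ∈ S⋆`, `j ∈ S⋆ᶜ` with
`T_ij ≥ 1` (the edge `(i,j)` lies in a triangle) is at most
`s * n * (s * p_out² + λ * p_out²)`. -/
theorem local_sbm_boundary_cut1 (n s : ℕ) (S : Finset (Fin (n + s))) (hS : S.card = s)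
    (pout lam : ENNReal)
    (q : {e : Fin (n + s) × Fin (n + s) // e.1 < e.2} → ENNReal) (hq1 : ∀ e, q e ≤ 1)
    (hcross : ∀ e, ((e.1.1 ∈ S ∧ e.1.2 ∉ S) ∨ (e.1.1 ∉ S ∧ e.1.2 ∈ S)) → q e ≤ pout)
    (hsparse : 2 * ∑ e ∈ Finset.univ.filter
        (fun e : {e : Fin (n + s) × Fin (n + s) // e.1 < e.2} => e.1.1 ∉ S ∧ e.1.2 ∉ S), q e
      ≤ (n : ENNReal) * lam) :
    (Measure.pi fun e => (PMF.bernoulli (q e).toNNReal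
      (by simpa using ENNReal.toNNReal_mono ENNReal.one_ne_top (hq1 e))).toMeasure)
      {ω | ∃ i ∈ S, ∃ j ∉ S, 1 ≤ (Finset.univ.filter fun k =>
          adjOf ω i j = true ∧ adjOf ω i k = true ∧ adjOf ω k j = true).card}
      ≤ (s : ENNReal) * n * ((s : ENNReal) * pout ^ 2 + lam * pout ^ 2) := by
  have hcompl : #Sᶜ = n := by rw [card_compl, hS, Fintype.card_fin, Nat.add_sub_cancel]
  have hinside : ∑ j ∈ Sᶜ, ∑ k ∈ Sᶜ, (pairWeight q (j, k) + pairWeight q (k, j)) ≤ n * lam := by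
    rw [sum_sum_pairWeight_add]
    simpa only [mem_compl] using hsparse
  calc _ ≤ ∑ i ∈ S, ∑ j ∈ Sᶜ, ∑ k,
          Measure.pi (fun e => boolBernoulli (q e) (hq1 e)) (triangleEvent i j k) :=
        measure_setOf_exists_triangle_le _ S
    _ ≤ ∑ i ∈ S, ∑ j ∈ Sᶜ, (#S * pout ^ 2 +
          (∑ k ∈ Sᶜ, (pairWeight q (j, k) + pairWeight q (k, j))) * pout ^ 2) := by
        gcongr with i hi j hj
        exact sum_measure_triangleEvent_le q hq1 hcross hi (mem_compl.mp hj)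
    _ = s * (n * (s * pout ^ 2) +
          (∑ j ∈ Sᶜ, ∑ k ∈ Sᶜ, (pairWeight q (j, k) + pairWeight q (k, j))) * pout ^ 2) := by
        simp only [sum_add_distrib, sum_const, ← sum_mul, hS, hcompl, nsmul_eq_mul, mul_add]
    _ ≤ s * (n * (s * pout ^ 2) + n * lam * pout ^ 2) := by gcongr
    _ = s * n * (s * pout ^ 2 + lam * pout ^ 2) := by ring
end
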